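/- arXiv:0911.1446 — 6 statements merged into one kernel-verified Lean document; each statement's English description precedes it below -/
import Mathlib

section
/- For every m ∈ ℤ³, i ∈ {1,2,3} and ε ∈ {1,-1}, the identity (((s^i_m + ε c^i_m) · ∇)(s^i_m + ε c^i_m))(x) = ε m_i c^i_{2m}(x) holds for all x ∈ ℝ³. -/
/-- The vector field `c^i_m(x) = e_i cos⟨m, x⟩` on `ℝ³`. -/
noncomputable def vcos (m : Fin 3 → ℤ) (i : Fin 3) : (Fin 3 → ℝ) → (Fin 3 → ℝ) :=
  fun x => Pi.single i (Real.cos (∑ j, (m j : ℝ) * x j))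

/-- The vector field `s^i_m(x) = e_i sin⟨m, x⟩` on `ℝ³`. -/
noncomputable def vsin (m : Fin 3 → ℤ) (i : Fin 3) : (Fin 3 → ℝ) → (Fin 3 → ℝ) :=
  fun x => Pi.single i (Real.sin (∑ j, (m j : ℝ) * x j))

/-- The convective derivative `(u·∇)v`, with `((u·∇)v)_k = ∑_j u_j ∂_j v_k`. -/
noncomputable def conv (u v : (Fin 3 → ℝ) → (Fin 3 → ℝ)) : (Fin 3 → ℝ) → (Fin 3 → ℝ) :=
  fun x k => ∑ j, u x j * fderiv ℝ (fun y => v y k) x (Pi.single j 1)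


/-! The field `s^i_m + ε c^i_m` is a plane wave `e_i g(⟨m, x⟩)` with profile `g = sin + ε cos`,
and for any plane wave polarised along `e_i` one has `((u·∇)u)(x) = m_i g(⟨m,x⟩) g'(⟨m,x⟩) e_i`.
Here `g g' = (sin + ε cos)(cos - ε sin) = ε (cos² - sin²) = ε cos 2t` because `ε² = 1`. -/

noncomputable def planeWave (ξ : Fin 3 → ℝ) (i : Fin 3) (g : ℝ → ℝ) :
    (Fin 3 → ℝ) → (Fin 3 → ℝ) :=
  fun x => Pi.single i (g (∑ j, ξ j * x j))

theorem fderiv_comp_sum_mul_apply_single {ι : Type*} [Fintype ι] [DecidableEq ι]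
    {g : ℝ → ℝ} {ξ x : ι → ℝ} (hg : DifferentiableAt ℝ g (∑ j, ξ j * x j)) (k : ι) :
    fderiv ℝ (fun y => g (∑ j, ξ j * y j)) x (Pi.single k 1) =
      deriv g (∑ j, ξ j * x j) * ξ k := by
  have hdot : HasFDerivAt (fun y : ι → ℝ => ∑ j, ξ j * y j)
      (∑ j, ξ j • ContinuousLinearMap.proj (R := ℝ) (φ := fun _ : ι => ℝ) j) x :=
    HasFDerivAt.fun_sum fun j _ => (hasFDerivAt_apply j x).const_mul (ξ j)
  have hcomp : HasFDerivAt (fun y => g (∑ j, ξ j * y j)) _ x :=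
    hg.hasDerivAt.comp_hasFDerivAt x hdot
  rw [hcomp.fderiv]
  simp [Pi.single_apply]

theorem conv_planeWave {ξ : Fin 3 → ℝ} {i : Fin 3} {g : ℝ → ℝ} {x : Fin 3 → ℝ}
    (hg : DifferentiableAt ℝ g (∑ j, ξ j * x j)) :
    conv (planeWave ξ i g) (planeWave ξ i g) x =
      Pi.single i (g (∑ j, ξ j * x j) * deriv g (∑ j, ξ j * x j) * ξ i) := by
  funext k
  rcases eq_or_ne k i with rfl | hk
  · simp [conv, fderiv_comp_sum_mul_apply_single hg, planeWave, Pi.single_apply, mul_assoc]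
  · have hcomp : (fun y => planeWave ξ i g y k) = 0 := funext fun y => Pi.single_eq_of_ne hk _
    simp [conv, hcomp, Pi.single_eq_of_ne hk]

theorem vsin_add_smul_vcos (m : Fin 3 → ℤ) (i : Fin 3) (ε : ℝ) :
    vsin m i + ε • vcos m i =
      planeWave (fun j => (m j : ℝ)) i (fun t => Real.sin t + ε * Real.cos t) := by
  funext x
  simp [vsin, vcos, planeWave, Pi.single_add, ← Pi.single_smul', smul_eq_mul]

theorem vcos_two_nsmul_apply (m : Fin 3 → ℤ) (i : Fin 3) (x : Fin 3 → ℝ) :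
    vcos (2 • m) i x = Pi.single i (Real.cos (2 * ∑ j, (m j : ℝ) * x j)) := by
  simp [vcos, Finset.mul_sum, mul_assoc]

theorem sin_add_mul_cos_mul_cos_sub_mul_sin {ε : ℝ} (hε : ε ^ 2 = 1) (t : ℝ) :
    (Real.sin t + ε * Real.cos t) * (Real.cos t - ε * Real.sin t) = ε * Real.cos (2 * t) := by
  rw [Real.cos_two_mul']
  linear_combination (-Real.sin t * Real.cos t) * hε

theorem stmt2 (m : Fin 3 → ℤ) (i : Fin 3) (ε : ℝ) (hε : ε = 1 ∨ ε = -1) (x : Fin 3 → ℝ) :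
    conv (vsin m i + ε • vcos m i) (vsin m i + ε • vcos m i) x
      = (ε * (m i : ℝ)) • vcos (2 • m) i x := by
  have hε2 : ε ^ 2 = 1 := by rcases hε with rfl | rfl <;> norm_num
  set θ := ∑ j, (m j : ℝ) * x j
  have hderiv : HasDerivAt (fun t => Real.sin t + ε * Real.cos t)
      (Real.cos θ - ε * Real.sin θ) θ :=
    ((Real.hasDerivAt_sin θ).fun_add ((Real.hasDerivAt_cos θ).const_mul ε)).congr_deriv (by ring)
  rw [vsin_add_smul_vcos, conv_planeWave hderiv.differentiableAt, hderiv.deriv,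
    sin_add_mul_cos_mul_cos_sub_mul_sin hε2, vcos_two_nsmul_apply, ← Pi.single_smul]
  congr 1
  ring
end

section
/- For every n ∈ ℤ³ and all indices a, b ∈ {1,2,3}, the identity (((c^a_n + c^b_n) · ∇)(c^a_n + c^b_n))(x) = -((n_a + n_b)/2)(s^a_{2n}(x) + s^b_{2n}(x)) holds for all x ∈ ℝ³. -/
/-!
The field `c^a_n + c^b_n` is `cos θ • w` with `θ = ⟨n, x⟩` and the constant vector `w = e_a + e_b`,
so its convective derivative is `cos θ · ∂_w (cos θ) · w = -⟨n, w⟩ sin θ cos θ · w`; here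
`⟨n, w⟩ = n_a + n_b` and `sin θ cos θ = sin 2θ / 2`.
-/

open Real

theorem conv_self_smul_const (f : (Fin 3 → ℝ) → ℝ) (w x : Fin 3 → ℝ)
    (hf : DifferentiableAt ℝ f x) :
    conv (fun y => f y • w) (fun y => f y • w) x = (f x * fderiv ℝ f x w) • w := by
  funext k
  have hw : fderiv ℝ f x w = ∑ j, w j * fderiv ℝ f x (Pi.single j 1) := by
    conv_lhs => rw [pi_eq_sum_univ' w]
    simp [map_sum]
  simp only [conv, Pi.smul_apply, smul_eq_mul, fderiv_mul_const hf, hw, smul_apply,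
    Finset.mul_sum, Finset.sum_mul]
  exact Finset.sum_congr rfl fun j _ => by ring

theorem fderiv_cos_sum_mul_apply {ι : Type*} [Fintype ι] (m x w : ι → ℝ) :
    fderiv ℝ (fun y => cos (∑ j, m j * y j)) x w = -sin (∑ j, m j * x j) * ∑ j, m j * w j := by
  set L : (ι → ℝ) →L[ℝ] ℝ := ∑ j, m j • ContinuousLinearMap.proj j
  have hL : ∀ y, L y = ∑ j, m j * y j := fun y => by simp [L]
  have hcos := (L.hasFDerivAt (x := x)).cos
  simp only [hL] at hcos
  rw [hcos.fderiv]
  simp [hL]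

theorem vcos_add_vcos (n : Fin 3 → ℤ) (a b : Fin 3) :
    vcos n a + vcos n b
      = fun y => cos (∑ j, (n j : ℝ) * y j) • (Pi.single a 1 + Pi.single b 1 : Fin 3 → ℝ) := by
  funext y
  simp only [vcos, Pi.add_apply, smul_add, ← Pi.single_smul', smul_eq_mul, mul_one]

theorem vsin_two_nsmul (n : Fin 3 → ℤ) (i : Fin 3) (x : Fin 3 → ℝ) :
    vsin (2 • n) i x
      = (2 * sin (∑ j, (n j : ℝ) * x j) * cos (∑ j, (n j : ℝ) * x j)) • Pi.single i 1 := by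
  have : ∑ j, (((2 • n) j : ℤ) : ℝ) * x j = 2 * ∑ j, (n j : ℝ) * x j := by
    simp only [Pi.smul_apply, nsmul_eq_mul, Int.cast_mul, Nat.cast_ofNat, Int.cast_ofNat,
      Finset.mul_sum, mul_assoc]
  rw [vsin, this, sin_two_mul, ← Pi.single_smul', smul_eq_mul, mul_one]

theorem stmt3 (n : Fin 3 → ℤ) (a b : Fin 3) (x : Fin 3 → ℝ) :
    conv (vcos n a + vcos n b) (vcos n a + vcos n b) x
      = (-(((n a : ℝ) + (n b : ℝ)) / 2)) • (vsin (2 • n) a x + vsin (2 • n) b x) := by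
  have hdiff : DifferentiableAt ℝ (fun y : Fin 3 → ℝ => cos (∑ j, (n j : ℝ) * y j)) x := by
    fun_prop
  have hdir : ∑ j, (n j : ℝ) * (Pi.single a 1 + Pi.single b 1 : Fin 3 → ℝ) j = n a + n b := by
    simp [mul_add, Finset.sum_add_distrib, Pi.single_apply]
  rw [vcos_add_vcos, conv_self_smul_const _ _ _ hdiff, fderiv_cos_sum_mul_apply, hdir,
    vsin_two_nsmul, vsin_two_nsmul, ← smul_add, smul_smul]
  congr 1
  ring
end

section
/- For every n ∈ ℤ³ and all indices a, b ∈ {1,2,3}, the identity (((s^a_n + s^b_n) · ∇)(s^a_n + s^b_n))(x) = ((n_a + n_b)/2)(s^a_{2n}(x) + s^b_{2n}(x)) holds for all x ∈ ℝ³. -/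
/-!
Writing `e = e_a + e_b`, the field is `u = sin⟨n, ·⟩ • e`, a scalar multiple of a constant vector,
so `(u·∇)u = sin⟨n, x⟩ · (∂_e sin⟨n, ·⟩)(x) • e = sin⟨n, x⟩ cos⟨n, x⟩ ⟨n, e⟩ • e`, and
`⟨n, e⟩ = n_a + n_b`; the double-angle formula turns `sin · cos` into `sin⟨2n, x⟩ / 2`.
-/

open Real

section DotProduct

variable {ι : Type*} [Fintype ι]

theorem ContinuousLinearMap.apply_eq_sum_mul_single [DecidableEq ι] (L : (ι → ℝ) →L[ℝ] ℝ)
    (v : ι → ℝ) : L v = ∑ j, v j * L (Pi.single j 1) := by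
  conv_lhs => rw [← Finset.univ_sum_single v]
  simp only [map_sum]
  refine Finset.sum_congr rfl fun j _ => ?_
  rw [← smul_eq_mul, ← map_smul, ← Pi.single_smul', smul_eq_mul, mul_one]

noncomputable def dotCLM (c : ι → ℝ) : (ι → ℝ) →L[ℝ] ℝ :=
  ∑ j, c j • ContinuousLinearMap.proj j

@[simp]
theorem dotCLM_apply (c y : ι → ℝ) : dotCLM c y = ∑ j, c j * y j := by
  simp [dotCLM]

theorem hasFDerivAt_sin_dot (c x : ι → ℝ) :
    HasFDerivAt (fun y => sin (∑ j, c j * y j)) (cos (∑ j, c j * x j) • dotCLM c) x := by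
  simpa using (dotCLM c).hasFDerivAt.sin (x := x)

end DotProduct

theorem vsin_apply_eq_smul (m : Fin 3 → ℤ) (i : Fin 3) (y : Fin 3 → ℝ) :
    vsin m i y = sin (∑ j, (m j : ℝ) * y j) • Pi.single i 1 := by
  rw [vsin, ← Pi.single_smul', smul_eq_mul, mul_one]

theorem conv_smul_const {f g : (Fin 3 → ℝ) → ℝ} {x : Fin 3 → ℝ} (hg : DifferentiableAt ℝ g x)
    (v w : Fin 3 → ℝ) :
    conv (fun y => f y • v) (fun y => g y • w) x = (f x * fderiv ℝ g x v) • w := by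
  funext k
  simp only [conv, Pi.smul_apply, smul_eq_mul, fderiv_mul_const hg,
    _root_.smul_apply, (fderiv ℝ g x).apply_eq_sum_mul_single v, Finset.mul_sum,
    Finset.sum_mul]
  exact Finset.sum_congr rfl fun j _ => by ring

theorem stmt4 (n : Fin 3 → ℤ) (a b : Fin 3) (x : Fin 3 → ℝ) :
    conv (vsin n a + vsin n b) (vsin n a + vsin n b) x
      = (((n a : ℝ) + (n b : ℝ)) / 2) • (vsin (2 • n) a x + vsin (2 • n) b x) := by
  have hfield : vsin n a + vsin n b
      = fun y => sin (∑ j, (n j : ℝ) * y j) • (Pi.single a 1 + Pi.single b 1) := by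
    funext y
    simp only [Pi.add_apply, vsin_apply_eq_smul, smul_add]
  have hdouble : ∑ j, (((2 • n) j : ℤ) : ℝ) * x j = 2 * ∑ j, (n j : ℝ) * x j := by
    simp only [Pi.smul_apply, nsmul_eq_mul, Int.cast_mul, Int.cast_natCast, Finset.mul_sum,
      mul_assoc]
    norm_num
  have hderiv := hasFDerivAt_sin_dot (fun j => (n j : ℝ)) x
  rw [hfield, conv_smul_const hderiv.differentiableAt, hderiv.fderiv, vsin_apply_eq_smul,
    vsin_apply_eq_smul, hdouble, ← smul_add, smul_smul, sin_two_mul]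
  congr 1
  simp [Pi.single_apply, mul_add, Finset.sum_add_distrib]
  ring
end

section
/- For every n, m ∈ ℤ³, every i ∈ {1,2,3} and every ε ∈ {1,-1}, the identity (((s^i_n + ε c^i_m) · ∇)(s^i_n + ε c^i_m))(x) = (n_i/2) s^i_{2n}(x) - (m_i/2) s^i_{2m}(x) + ε ((n_i + m_i)/2) c^i_{n+m}(x) + ε ((n_i - m_i)/2) c^i_{n-m}(x) holds for all x ∈ ℝ³. -/
/-! The field `u = vsin n i + ε • vcos m i` points along `e_i`, so `(u·∇)u = u_i ∂_i u_i e_i`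
with `u_i = sin⟨n,x⟩ + ε cos⟨m,x⟩`. Expanding the product, `ε² = 1` turns the `cos⟨m,x⟩ sin⟨m,x⟩`
term into `-(m_i/2) sin⟨2m,x⟩`, and the product-to-sum formulas give the remaining terms. -/

open ContinuousLinearMap

section Pairing

variable {ι : Type*} [Fintype ι]

noncomputable def intPairing (m : ι → ℤ) : (ι → ℝ) →L[ℝ] ℝ :=
  ∑ j, (m j : ℝ) • proj j

theorem intPairing_apply (m : ι → ℤ) (x : ι → ℝ) :
    intPairing m x = ∑ j, (m j : ℝ) * x j := by
  simp [intPairing]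

theorem intPairing_single [DecidableEq ι] (m : ι → ℤ) (i : ι) :
    intPairing m (Pi.single i 1) = m i := by
  simp [intPairing_apply, Pi.single_apply]

theorem intPairing_add (n m : ι → ℤ) (x : ι → ℝ) :
    intPairing (n + m) x = intPairing n x + intPairing m x := by
  simp [intPairing_apply, add_mul, Finset.sum_add_distrib]

theorem intPairing_sub (n m : ι → ℤ) (x : ι → ℝ) :
    intPairing (n - m) x = intPairing n x - intPairing m x := by
  simp [intPairing_apply, sub_mul, Finset.sum_sub_distrib]

theorem intPairing_two_nsmul (m : ι → ℤ) (x : ι → ℝ) :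
    intPairing (2 • m) x = 2 * intPairing m x := by
  rw [two_nsmul, intPairing_add, two_mul]

theorem hasFDerivAt_sin_intPairing (m : ι → ℤ) (x : ι → ℝ) :
    HasFDerivAt (fun y => Real.sin (intPairing m y)) (Real.cos (intPairing m x) • intPairing m) x :=
  (Real.hasDerivAt_sin _).comp_hasFDerivAt x (intPairing m).hasFDerivAt

theorem hasFDerivAt_cos_intPairing (m : ι → ℤ) (x : ι → ℝ) :
    HasFDerivAt (fun y => Real.cos (intPairing m y)) (-Real.sin (intPairing m x) • intPairing m) x :=
  (Real.hasDerivAt_cos _).comp_hasFDerivAt x (intPairing m).hasFDerivAt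

theorem fderiv_sin_add_mul_cos_single [DecidableEq ι] (n m : ι → ℤ) (ε : ℝ) (x : ι → ℝ) (i : ι) :
    fderiv ℝ (fun y => Real.sin (intPairing n y) + ε * Real.cos (intPairing m y)) x (Pi.single i 1)
      = n i * Real.cos (intPairing n x) - ε * (m i * Real.sin (intPairing m x)) := by
  have hderiv : HasFDerivAt (fun y => Real.sin (intPairing n y) + ε * Real.cos (intPairing m y))
      (Real.cos (intPairing n x) • intPairing n + ε • (-Real.sin (intPairing m x) • intPairing m)) x :=
    (hasFDerivAt_sin_intPairing n x).add ((hasFDerivAt_cos_intPairing m x).const_mul ε)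
  rw [hderiv.fderiv]
  simp only [add_apply, smul_apply, intPairing_single, smul_eq_mul]
  ring

end Pairing

theorem vsin_apply (m : Fin 3 → ℤ) (i : Fin 3) (x : Fin 3 → ℝ) :
    vsin m i x = Pi.single i (Real.sin (intPairing m x)) := by
  rw [vsin, intPairing_apply]

theorem vcos_apply (m : Fin 3 → ℤ) (i : Fin 3) (x : Fin 3 → ℝ) :
    vcos m i x = Pi.single i (Real.cos (intPairing m x)) := by
  rw [vcos, intPairing_apply]

theorem conv_single (f g : (Fin 3 → ℝ) → ℝ) (i : Fin 3) (x : Fin 3 → ℝ) :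
    conv (fun y => Pi.single i (f y)) (fun y => Pi.single i (g y)) x
      = Pi.single i (f x * fderiv ℝ g x (Pi.single i 1)) := by
  funext k
  rcases eq_or_ne k i with rfl | hk
  · simp only [conv, Pi.single_eq_same]
    rw [Finset.sum_eq_single k (fun j _ hj => by rw [Pi.single_eq_of_ne hj, zero_mul])
      (by simp)]
    simp
  · simp [conv, Pi.single_eq_of_ne hk]

theorem sin_add_mul_cos_mul_eq {ε : ℝ} (hε : ε * ε = 1) (a b p q : ℝ) :
    (Real.sin a + ε * Real.cos b) * (p * Real.cos a - ε * (q * Real.sin b))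
      = p / 2 * Real.sin (2 * a) - q / 2 * Real.sin (2 * b)
        + ε * ((p + q) / 2) * Real.cos (a + b) + ε * ((p - q) / 2) * Real.cos (a - b) := by
  rw [Real.sin_two_mul, Real.sin_two_mul, Real.cos_add, Real.cos_sub]
  linear_combination (-q * Real.cos b * Real.sin b) * hε

theorem stmt6 (n m : Fin 3 → ℤ) (i : Fin 3) (ε : ℝ) (hε : ε = 1 ∨ ε = -1) (x : Fin 3 → ℝ) :
    conv (vsin n i + ε • vcos m i) (vsin n i + ε • vcos m i) x
      = ((n i : ℝ) / 2) • vsin (2 • n) i x - ((m i : ℝ) / 2) • vsin (2 • m) i x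
        + (ε * (((n i : ℝ) + (m i : ℝ)) / 2)) • vcos (n + m) i x
        + (ε * (((n i : ℝ) - (m i : ℝ)) / 2)) • vcos (n - m) i x := by
  have hε2 : ε * ε = 1 := by rcases hε with rfl | rfl <;> norm_num
  have hfield : vsin n i + ε • vcos m i
      = fun y => Pi.single i (Real.sin (intPairing n y) + ε * Real.cos (intPairing m y)) := by
    funext y
    simp only [Pi.add_apply, Pi.smul_apply, vsin_apply, vcos_apply, Pi.single_add, ← Pi.single_smul,
      smul_eq_mul]
  rw [hfield, conv_single, fderiv_sin_add_mul_cos_single, sin_add_mul_cos_mul_eq hε2]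
  simp only [vsin_apply, vcos_apply, intPairing_two_nsmul, intPairing_add, intPairing_sub,
    ← Pi.single_smul, ← Pi.single_add, ← Pi.single_sub, smul_eq_mul]
end

section
/- Let j ≥ 1 be an integer, let V_j denote the real linear span (inside the vector space of smooth vector fields ℝ³ → ℝ³) of the functions {c^i_m, s^i_m : m ∈ ℤ³, ‖m‖₁ ≤ 2^j, i ∈ {1,2,3}}, and similarly V_{j-1} with ‖m‖₁ ≤ 2^{j-1}. Then for every w ∈ V_j there exist p ∈ ℕ, a function η ∈ V_{j-1} and functions ζ^1, …, ζ^p ∈ V_{j-1} such that w = η - Σ_{i=1}^p (ζ^i · ∇) ζ^i. -/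
/-- The span of the trigonometric vector fields `c^i_m, s^i_m` with `‖m‖₁ ≤ 2^j`. -/
noncomputable def trigSpan (j : ℕ) : Submodule ℝ ((Fin 3 → ℝ) → (Fin 3 → ℝ)) :=
  Submodule.span ℝ
    {f | ∃ (m : Fin 3 → ℤ) (i : Fin 3), (∑ a, |m a|) ≤ 2 ^ j ∧ (f = vcos m i ∨ f = vsin m i)}

/-! Split a frequency `m` with `‖m‖₁ ≤ 2 ^ (n + 1)` as `m = a + b` with `‖a‖₁, ‖b‖₁ ≤ 2 ^ n` and
`a`, `b` of the same sign as `m` in every coordinate. For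
`ζ_φ = e_t cos(⟨a,x⟩ + φ) + s e_i cos(⟨b,x⟩ + ψ - φ)` the self-interactions cancel in
`(ζ₀·∇)ζ₀ + (ζ_{π/2}·∇)ζ_{π/2}`, which equals
`s (a_i e_t + b_t e_i) cos(⟨a + b, x⟩ + ψ + π/2)`. Taking `t = i` if `m_i ≠ 0`, and otherwise
any `t` with `b_t ≠ 0` (then `a_i = 0`), every multiple of `e_i cos(⟨m,x⟩ + θ)` is `-∑ (ζ·∇)ζ` with
`ζ ∈ V_n`. The fields `η - ∑ (ζ·∇)ζ` are closed under addition, so they contain all of `V_{n+1}`. -/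

open Real

theorem exists_add_eq_of_le_sum_abs {ι : Type*} [Fintype ι] (m : ι → ℤ) (r : ℕ)
    (hr : (r : ℤ) ≤ ∑ k, |m k|) :
    ∃ a b : ι → ℤ, a + b = m ∧ (∀ k, |a k| + |b k| = |m k|) ∧ ∑ k, |a k| = r := by
  obtain ⟨g, hgm, hgr⟩ :=
    (Finsupp.equivFunOnFinite.symm fun k => (m k).natAbs).exists_le_degree_eq r
      (by simpa [Finsupp.degree_eq_sum, ← Int.ofNat_le, Int.natCast_natAbs] using hr)
  have hg (k) : |(m k).sign * g k| = g k ∧ |m k - (m k).sign * g k| = |m k| - g k := by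
    have := Finsupp.le_def.1 hgm k
    simp only [Finsupp.equivFunOnFinite_symm_apply_apply] at this
    rcases lt_trichotomy (m k) 0 with h | h | h <;>
      simp [h, Int.sign_eq_neg_one_of_neg, Int.sign_eq_one_of_pos, abs_eq_max_neg] <;> omega
  refine ⟨fun k => (m k).sign * g k, fun k => m k - (m k).sign * g k, by ext; simp,
    fun k => by rw [(hg k).1, (hg k).2]; ring, ?_⟩
  simp only [(hg _).1, ← Nat.cast_sum, ← hgr, Finsupp.degree_eq_sum]

theorem exists_add_eq_of_sum_abs_le_two_mul {ι : Type*} [Fintype ι] (m : ι → ℤ) (N : ℕ)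
    (hlt : N < ∑ k, |m k|) (hle : ∑ k, |m k| ≤ 2 * N) :
    ∃ a b : ι → ℤ, a + b = m ∧ (∀ k, |a k| + |b k| = |m k|) ∧
      ∑ k, |a k| ≤ N ∧ ∑ k, |b k| ≤ N ∧ b ≠ 0 := by
  obtain ⟨a, b, rfl, habs, hsum⟩ := exists_add_eq_of_le_sum_abs m N hlt.le
  have hb : ∑ k, |b k| = ∑ k, |(a + b) k| - N := by
    rw [← hsum, ← Finset.sum_congr rfl fun k _ => habs k, Finset.sum_add_distrib]; ring
  refine ⟨a, b, rfl, habs, hsum.le, by omega, fun h0 => ?_⟩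
  subst h0
  simp only [Pi.zero_apply, abs_zero, Finset.sum_const_zero, add_zero] at hb hlt
  omega

noncomputable def wave (m : Fin 3 → ℤ) (i : Fin 3) (θ : ℝ) : (Fin 3 → ℝ) → (Fin 3 → ℝ) :=
  fun x => Pi.single i (cos (∑ j, (m j : ℝ) * x j + θ))

theorem vcos_eq_wave (m : Fin 3 → ℤ) (i : Fin 3) : vcos m i = wave m i 0 := by
  ext x
  simp [vcos, wave]

theorem vsin_eq_wave (m : Fin 3 → ℤ) (i : Fin 3) : vsin m i = wave m i (-(π / 2)) := by
  ext x
  simp [vsin, wave, ← sub_eq_add_neg, cos_sub_pi_div_two]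

theorem wave_eq_cos_smul_vcos_sub_sin_smul_vsin (m : Fin 3 → ℤ) (i : Fin 3) (θ : ℝ) :
    wave m i θ = cos θ • vcos m i - sin θ • vsin m i := by
  ext x k
  by_cases hk : k = i
  · subst hk; simp [wave, vcos, vsin, cos_add]; ring
  · simp [wave, vcos, vsin, hk]

theorem wave_mem_trigSpan {n : ℕ} {m : Fin 3 → ℤ} (hm : ∑ k, |m k| ≤ 2 ^ n) (i : Fin 3) (θ : ℝ) :
    wave m i θ ∈ trigSpan n := by
  rw [wave_eq_cos_smul_vcos_sub_sin_smul_vsin]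
  exact sub_mem (Submodule.smul_mem _ _ (Submodule.subset_span ⟨m, i, hm, Or.inl rfl⟩))
    (Submodule.smul_mem _ _ (Submodule.subset_span ⟨m, i, hm, Or.inr rfl⟩))

theorem hasFDerivAt_cos_dot (m : Fin 3 → ℤ) (θ : ℝ) (x : Fin 3 → ℝ) :
    HasFDerivAt (fun y : Fin 3 → ℝ => cos (∑ j, (m j : ℝ) * y j + θ))
      (-sin (∑ j, (m j : ℝ) * x j + θ) •
        ∑ j, (m j : ℝ) • ContinuousLinearMap.proj (R := ℝ) (φ := fun _ : Fin 3 => ℝ) j) x := by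
  have hdot := HasFDerivAt.sum (u := Finset.univ) fun j _ =>
    (hasFDerivAt_apply (𝕜 := ℝ) j x).const_mul (m j : ℝ)
  simpa [neg_smul] using (hdot.add_const θ).cos

theorem differentiable_wave (m : Fin 3 → ℤ) (i : Fin 3) (θ : ℝ) :
    Differentiable ℝ (wave m i θ) :=
  fun x => differentiableAt_pi.2 fun k => by
    by_cases hk : k = i
    · subst hk; simpa [wave] using (hasFDerivAt_cos_dot m θ x).differentiableAt
    · simp [wave, hk]

theorem conv_add_right {u v w : (Fin 3 → ℝ) → (Fin 3 → ℝ)} (hv : Differentiable ℝ v)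
    (hw : Differentiable ℝ w) : conv u (v + w) = conv u v + conv u w := by
  ext x k
  have hvk : DifferentiableAt ℝ (fun y => v y k) x := differentiableAt_pi.1 (hv x) k
  have hwk : DifferentiableAt ℝ (fun y => w y k) x := differentiableAt_pi.1 (hw x) k
  simp only [conv, Pi.add_apply, fderiv_fun_add hvk hwk, FunLike.coe_add, mul_add,
    Finset.sum_add_distrib]

theorem conv_smul_right (u v : (Fin 3 → ℝ) → (Fin 3 → ℝ)) (c : ℝ) :
    conv u (c • v) = c • conv u v := by
  ext x k
  have h : fderiv ℝ (fun y => (c • v) y k) x = c • fderiv ℝ (fun y => v y k) x :=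
    congrFun (fderiv_const_smul_field c) x
  show ∑ j, u x j * fderiv ℝ (fun y => (c • v) y k) x (Pi.single j 1) =
    c * ∑ j, u x j * fderiv ℝ (fun y => v y k) x (Pi.single j 1)
  rw [h]
  simp only [FunLike.coe_smul, Pi.smul_apply, smul_eq_mul, Finset.mul_sum]
  exact Finset.sum_congr rfl fun j _ => by ring

theorem conv_wave (u : (Fin 3 → ℝ) → (Fin 3 → ℝ)) (m : Fin 3 → ℤ) (i : Fin 3) (θ : ℝ) :
    conv u (wave m i θ) = fun x => (∑ j, u x j * m j) • wave m i (θ + π / 2) x := by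
  ext x k
  by_cases hk : k = i
  · subst hk
    simp [conv, wave, (hasFDerivAt_cos_dot m θ x).fderiv, Finset.sum_mul, ← add_assoc,
      cos_add_pi_div_two, Pi.single_apply]
    exact Finset.sum_congr rfl fun j _ => by ring
  · simp [conv, wave, hk]

theorem conv_wave_add_smul_wave (u : (Fin 3 → ℝ) → (Fin 3 → ℝ)) (a b : Fin 3 → ℤ)
    (t i : Fin 3) (s φ ψ : ℝ) :
    conv u (wave a t φ + s • wave b i ψ) = fun x =>
      (∑ j, u x j * a j) • wave a t (φ + π / 2) x +
        s • (∑ j, u x j * b j) • wave b i (ψ + π / 2) x := by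
  rw [conv_add_right (differentiable_wave a t φ) ((differentiable_wave b i ψ).const_smul s),
    conv_smul_right, conv_wave, conv_wave]
  rfl

theorem conv_self_add_conv_self_wave_pair (a b : Fin 3 → ℤ) (t i : Fin 3) (s ψ : ℝ) :
    conv (wave a t 0 + s • wave b i ψ) (wave a t 0 + s • wave b i ψ) +
      conv (wave a t (π / 2) + s • wave b i (ψ - π / 2))
        (wave a t (π / 2) + s • wave b i (ψ - π / 2)) =
      s • ((a i : ℝ) • wave (a + b) t (ψ + π / 2) + (b t : ℝ) • wave (a + b) i (ψ + π / 2)) := by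
  rw [conv_wave_add_smul_wave, conv_wave_add_smul_wave]
  ext x k
  simp only [wave, Pi.add_apply, Pi.smul_apply, Int.cast_add, add_mul, Finset.sum_add_distrib,
    Pi.single_apply]
  split_ifs <;> simp [cos_add, sin_add, cos_sub, sin_sub] <;> ring

noncomputable def trigSpanSubConvSums (n : ℕ) : AddSubmonoid ((Fin 3 → ℝ) → (Fin 3 → ℝ)) where
  carrier := {w | ∃ (p : ℕ) (η : (Fin 3 → ℝ) → (Fin 3 → ℝ)) (ζ : Fin p → (Fin 3 → ℝ) → (Fin 3 → ℝ)),
    η ∈ trigSpan n ∧ (∀ i, ζ i ∈ trigSpan n) ∧ w = η - ∑ i, conv (ζ i) (ζ i)}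
  zero_mem' := ⟨0, 0, Fin.elim0, zero_mem _, fun i => i.elim0, by simp⟩
  add_mem' := by
    rintro _ _ ⟨p, η, ζ, hη, hζ, rfl⟩ ⟨q, η', ζ', hη', hζ', rfl⟩
    refine ⟨p + q, η + η', Fin.append ζ ζ', add_mem hη hη', Fin.addCases (by simpa) (by simpa), ?_⟩
    rw [Fin.sum_univ_add]
    simp only [Fin.append_left, Fin.append_right]
    abel

theorem mem_trigSpanSubConvSums_of_mem_trigSpan {n : ℕ} {η : (Fin 3 → ℝ) → (Fin 3 → ℝ)}
    (hη : η ∈ trigSpan n) : η ∈ trigSpanSubConvSums n :=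
  ⟨0, η, Fin.elim0, hη, fun i => i.elim0, by simp⟩

theorem neg_conv_self_mem_trigSpanSubConvSums {n : ℕ} {ζ : (Fin 3 → ℝ) → (Fin 3 → ℝ)}
    (hζ : ζ ∈ trigSpan n) : -conv ζ ζ ∈ trigSpanSubConvSums n :=
  ⟨1, 0, ![ζ], zero_mem _, by simpa, by simp⟩

theorem neg_smul_wave_add_mem_trigSpanSubConvSums {n : ℕ} {a b : Fin 3 → ℤ}
    (ha : ∑ k, |a k| ≤ 2 ^ n) (hb : ∑ k, |b k| ≤ 2 ^ n) (t i : Fin 3) (s θ : ℝ) :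
    -(s • ((a i : ℝ) • wave (a + b) t θ + (b t : ℝ) • wave (a + b) i θ)) ∈
      trigSpanSubConvSums n := by
  have h := conv_self_add_conv_self_wave_pair a b t i s (θ - π / 2)
  rw [sub_add_cancel] at h
  rw [← h, neg_add]
  refine add_mem (neg_conv_self_mem_trigSpanSubConvSums ?_)
    (neg_conv_self_mem_trigSpanSubConvSums ?_) <;>
    exact add_mem (wave_mem_trigSpan ha _ _) (Submodule.smul_mem _ _ (wave_mem_trigSpan hb _ _))

theorem smul_wave_mem_trigSpanSubConvSums {n : ℕ} {m : Fin 3 → ℤ}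
    (hm : ∑ k, |m k| ≤ 2 ^ (n + 1)) (i : Fin 3) (c θ : ℝ) :
    c • wave m i θ ∈ trigSpanSubConvSums n := by
  by_cases hsmall : ∑ k, |m k| ≤ 2 ^ n
  · exact mem_trigSpanSubConvSums_of_mem_trigSpan
      (Submodule.smul_mem _ _ (wave_mem_trigSpan hsmall i θ))
  obtain ⟨a, b, rfl, habs, ha, hb, hb0⟩ := exists_add_eq_of_sum_abs_le_two_mul m (2 ^ n)
    (by push_cast; omega) (by push_cast; rw [← pow_succ']; exact hm)
  push_cast at ha hb
  by_cases hmi : a i + b i = 0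
  · have hai : a i = 0 := by
      have := habs i
      rw [Pi.add_apply, hmi, abs_zero] at this
      exact abs_eq_zero.1 (by linarith [abs_nonneg (a i), abs_nonneg (b i)])
    obtain ⟨t, hbt⟩ := Function.ne_iff.1 hb0
    have hbt' : (b t : ℝ) ≠ 0 := by exact_mod_cast hbt
    convert neg_smul_wave_add_mem_trigSpanSubConvSums ha hb t i (-c / b t) θ using 1
    rw [hai, Int.cast_zero, zero_smul, zero_add, smul_smul]
    field_simp
    rw [neg_smul, neg_neg]
  · have hmi' : (a i : ℝ) + b i ≠ 0 := by exact_mod_cast hmi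
    convert neg_smul_wave_add_mem_trigSpanSubConvSums ha hb i i (-c / (a i + b i)) θ using 1
    rw [← add_smul, smul_smul]
    field_simp
    rw [neg_smul, neg_neg]

theorem trigSpan_succ_le_trigSpanSubConvSums (n : ℕ) :
    (trigSpan (n + 1)).toAddSubmonoid ≤ trigSpanSubConvSums n := by
  rw [trigSpan, Submodule.span_eq_closure, AddSubmonoid.closure_le]
  rintro _ ⟨c, -, _, ⟨m, i, hm, rfl | rfl⟩, rfl⟩
  · rw [vcos_eq_wave]; exact smul_wave_mem_trigSpanSubConvSums hm i c 0
  · rw [vsin_eq_wave]; exact smul_wave_mem_trigSpanSubConvSums hm i c _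

theorem stmt8_general (j : ℕ) (w : (Fin 3 → ℝ) → (Fin 3 → ℝ)) (hw : w ∈ trigSpan j) :
    ∃ (p : ℕ) (η : (Fin 3 → ℝ) → (Fin 3 → ℝ)) (ζ : Fin p → (Fin 3 → ℝ) → (Fin 3 → ℝ)),
      η ∈ trigSpan (j - 1) ∧ (∀ i, ζ i ∈ trigSpan (j - 1)) ∧
        w = η - ∑ i, conv (ζ i) (ζ i) := by
  rcases j with _ | n
  -- `0 - 1 = 0` in `ℕ`
  · exact mem_trigSpanSubConvSums_of_mem_trigSpan hw
  · exact trigSpan_succ_le_trigSpanSubConvSums n hw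

theorem stmt8 (j : ℕ) (hj : 1 ≤ j) (w : (Fin 3 → ℝ) → (Fin 3 → ℝ)) (hw : w ∈ trigSpan j) :
    ∃ (p : ℕ) (η : (Fin 3 → ℝ) → (Fin 3 → ℝ)) (ζ : Fin p → (Fin 3 → ℝ) → (Fin 3 → ℝ)),
      η ∈ trigSpan (j - 1) ∧ (∀ i, ζ i ∈ trigSpan (j - 1)) ∧
        w = η - ∑ i, conv (ζ i) (ζ i) :=
  stmt8_general j w hw
end

section
/- Let X, Y, Z be real Banach spaces and B : X × Y → Z a continuous bilinear map. Let T > 0 and let ζ : ℝ → X be a bounded strongly measurable function satisfying ζ(t + 1) = ζ(t) and ζ(t + 1/2) = -ζ(t) for all t ∈ ℝ. Let χ_n : [0,T] → Y be a sequence of continuous functions that is uniformly bounded and uniformly equicontinuous (i.e., sup_n sup_t ‖χ_n(t)‖ < ∞, and for every ε > 0 there is δ > 0 such that ‖χ_n(t) - χ_n(s)‖ ≤ ε for all n whenever |t - s| ≤ δ). Then for every t₀ ∈ [0,T], the Bochner integrals ∫₀^{t₀} B(ζ(n t / T), χ_n(t)) dt converge to 0 in Z as n → ∞. -/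
/-!
Since `ζ` is `1/2`-antiperiodic it has mean zero over its period `1`, so its primitive is
bounded and `∫_c^d ζ(n t / T) dt = O(1/n)` uniformly in `c, d`. On a partition of `[0, t₀]`
whose mesh is so fine that every `χ n` varies by less than `η` on each piece, freezing `χ n` at
the left endpoints costs `O(η)`, and what remains is a finite sum of such `O(1/n)` integrals.
-/

open MeasureTheory Filter Set Topology
open scoped Interval

namespace Function

variable {E : Type*} [NormedAddCommGroup E] [NormedSpace ℝ E] {f : ℝ → E}

theorem Antiperiodic.intervalIntegral_zero_two_mul_eq_zero {c : ℝ} (hf : Antiperiodic f c)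
    (hint : IntervalIntegrable f volume 0 c) : ∫ x in 0..2 * c, f x = 0 := by
  have hint' : IntervalIntegrable f volume c (2 * c) := by
    convert (hint.comp_sub_right c).neg using 1
    · ext x
      simp [hf.sub_eq]
    all_goals ring
  have hsecond : ∫ x in c..2 * c, f x = -∫ x in 0..c, f x := by
    have := intervalIntegral.integral_comp_add_right f c (a := 0) (b := c)
    rw [zero_add] at this
    rw [two_mul, ← this, ← intervalIntegral.integral_neg]
    exact intervalIntegral.integral_congr fun x _ => hf x
  rw [← intervalIntegral.integral_add_adjacent_intervals hint hint', hsecond, add_neg_cancel]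

theorem Periodic.norm_intervalIntegral_le_of_integral_eq_zero {p C : ℝ} (hf : Periodic f p)
    (hp : 0 < p) (hint : ∀ a b, IntervalIntegrable f volume a b) (hmean : ∫ x in 0..p, f x = 0)
    (hC : ∀ x, ‖f x‖ ≤ C) (a b : ℝ) : ‖∫ x in a..b, f x‖ ≤ 2 * C * p := by
  set F : ℝ → E := fun t => ∫ x in 0..t, f x
  have hF : Periodic F p := fun t => by
    simp only [F]
    rw [← intervalIntegral.integral_add_adjacent_intervals (hint 0 t) (hint t (t + p)),
      hf.intervalIntegral_add_eq t 0, zero_add, hmean, add_zero]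
  have hFC : ∀ t, ‖F t‖ ≤ C * p := fun t => by
    obtain ⟨s, ⟨hs0, hsp⟩, hts⟩ := hF.exists_mem_Ico₀ hp t
    have hC0 : 0 ≤ C := (norm_nonneg _).trans (hC 0)
    calc ‖F t‖ = ‖F s‖ := by rw [hts]
      _ ≤ C * |s - 0| := intervalIntegral.norm_integral_le_of_norm_le_const fun x _ => hC x
      _ ≤ C * p := by rw [sub_zero, abs_of_nonneg hs0]; gcongr
  rw [← intervalIntegral.integral_interval_sub_left (hint 0 b) (hint 0 a)]
  calc ‖F b - F a‖ ≤ ‖F b‖ + ‖F a‖ := norm_sub_le _ _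
    _ ≤ 2 * C * p := by linarith [hFC a, hFC b]

theorem Periodic.tendsto_intervalIntegral_comp_mul_atTop {p C : ℝ} (hf : Periodic f p)
    (hp : 0 < p) (hint : ∀ a b, IntervalIntegrable f volume a b) (hmean : ∫ x in 0..p, f x = 0)
    (hC : ∀ x, ‖f x‖ ≤ C) (a b : ℝ) :
    Tendsto (fun r : ℝ => ∫ x in a..b, f (r * x)) atTop (𝓝 0) := by
  refine squeeze_zero_norm' ?_ ((tendsto_const_nhds (x := 2 * C * p)).div_atTop tendsto_id)
  filter_upwards [eventually_gt_atTop 0] with r hr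
  rw [intervalIntegral.integral_comp_mul_left f hr.ne', norm_smul, Real.norm_eq_abs, abs_inv,
    abs_of_pos hr, inv_mul_le_iff₀ hr, id, mul_div_cancel₀ _ hr.ne']
  exact hf.norm_intervalIntegral_le_of_integral_eq_zero hp hint hmean hC _ _

end Function

theorem exists_partition_Icc_mesh_le {a b δ : ℝ} (hab : a ≤ b) (hδ : 0 < δ) :
    ∃ (K : ℕ) (p : ℕ → ℝ), Monotone p ∧ p 0 = a ∧ p K = b ∧ (∀ j, p j ∈ Icc a b) ∧
      ∀ j, p (j + 1) - p j ≤ δ := by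
  refine ⟨⌈(b - a) / δ⌉₊, fun j => min b (a + j * δ), fun j k hjk => ?_, by simp [hab], ?_,
    fun j => ⟨le_min hab (by simp; positivity), min_le_left _ _⟩, fun j => ?_⟩
  · dsimp only
    gcongr
  · have := (div_le_iff₀ hδ).1 (Nat.le_ceil ((b - a) / δ))
    exact min_eq_left (by linarith)
  · dsimp only
    push_cast
    rcases min_cases b (a + j * δ) with h | h <;> rcases min_cases b (a + (j + 1) * δ) with h' | h'
      <;> linarith

theorem uniformContinuousOn_of_forall_abs_sub_le {Y : Type*} [SeminormedAddCommGroup Y]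
    {h : ℝ → Y} {s : Set ℝ}
    (hh : ∀ ε > (0 : ℝ), ∃ δ > (0 : ℝ), ∀ x ∈ s, ∀ y ∈ s, |y - x| ≤ δ → ‖h y - h x‖ ≤ ε) :
    UniformContinuousOn h s := by
  refine Metric.uniformContinuousOn_iff_le.2 fun ε hε => ?_
  obtain ⟨δ, hδ, hδε⟩ := hh ε hε
  exact ⟨δ, hδ, fun x hx y hy hxy => by
    rw [dist_eq_norm]; exact hδε y hy x hx (by rwa [← Real.dist_eq])⟩

section Bilinear

variable {X Y Z : Type*} [NormedAddCommGroup X] [NormedSpace ℝ X] [CompleteSpace X]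
  [NormedAddCommGroup Y] [NormedSpace ℝ Y] [NormedAddCommGroup Z] [NormedSpace ℝ Z]
  [CompleteSpace Z] (B : X →L[ℝ] Y →L[ℝ] Z)

theorem norm_intervalIntegral_bilinear_le {g : ℝ → X} {h : ℝ → Y} {c d C ε : ℝ} (hcd : c ≤ d)
    (hg : IntervalIntegrable g volume c d) (hgC : ∀ t ∈ Icc c d, ‖g t‖ ≤ C)
    (hB : IntervalIntegrable (fun t => B (g t) (h t)) volume c d)
    (hh : ∀ t ∈ Icc c d, ‖h t - h c‖ ≤ ε) :
    ‖∫ t in c..d, B (g t) (h t)‖ ≤ ‖B‖ * C * ε * (d - c) + ‖B‖ * ‖∫ t in c..d, g t‖ * ‖h c‖ := by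
  have hfrozen : ∫ t in c..d, B (g t) (h c) = B (∫ t in c..d, g t) (h c) :=
    (B.flip (h c)).intervalIntegral_comp_comm hg
  have hfrozen_int : IntervalIntegrable (fun t => B (g t) (h c)) volume c d :=
    ⟨(B.flip (h c)).integrable_comp hg.1, (B.flip (h c)).integrable_comp hg.2⟩
  have hsplit : ∫ t in c..d, B (g t) (h t) =
      (∫ t in c..d, B (g t) (h t - h c)) + B (∫ t in c..d, g t) (h c) := by
    simp only [map_sub]
    rw [intervalIntegral.integral_sub hB hfrozen_int, hfrozen, sub_add_cancel]
  have hC : 0 ≤ C := (norm_nonneg _).trans (hgC c ⟨le_rfl, hcd⟩)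
  have hbound : ∀ t ∈ Ι c d, ‖B (g t) (h t - h c)‖ ≤ ‖B‖ * C * ε := fun t ht => by
    rw [uIoc_of_le hcd] at ht
    calc ‖B (g t) (h t - h c)‖ ≤ ‖B‖ * ‖g t‖ * ‖h t - h c‖ := B.le_opNorm₂ _ _
      _ ≤ ‖B‖ * C * ε := by
          gcongr
          · exact hgC t (Ioc_subset_Icc_self ht)
          · exact hh t (Ioc_subset_Icc_self ht)
  calc ‖∫ t in c..d, B (g t) (h t)‖
      ≤ ‖∫ t in c..d, B (g t) (h t - h c)‖ + ‖B (∫ t in c..d, g t) (h c)‖ := by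
        rw [hsplit]; exact norm_add_le _ _
    _ ≤ ‖B‖ * C * ε * (d - c) + ‖B‖ * ‖∫ t in c..d, g t‖ * ‖h c‖ := by
        gcongr
        · simpa [abs_of_nonneg (sub_nonneg.2 hcd)] using
            intervalIntegral.norm_integral_le_of_norm_le_const hbound
        · exact B.le_opNorm₂ _ _

theorem norm_intervalIntegral_bilinear_le_sum {g : ℝ → X} {h : ℝ → Y} {a b C D η : ℝ} {K : ℕ}
    {p : ℕ → ℝ} (hp_mono : Monotone p) (hp0 : p 0 = a) (hpK : p K = b)
    (hp_mem : ∀ j, p j ∈ Icc a b) (hg : IntegrableOn g (Icc a b))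
    (hgC : ∀ t ∈ Icc a b, ‖g t‖ ≤ C) (hB : IntegrableOn (fun t => B (g t) (h t)) (Icc a b))
    (hhD : ∀ t ∈ Icc a b, ‖h t‖ ≤ D)
    (hh : ∀ j, ∀ t ∈ Icc (p j) (p (j + 1)), ‖h t - h (p j)‖ ≤ η) :
    ‖∫ t in a..b, B (g t) (h t)‖ ≤
      ‖B‖ * C * η * (b - a) + ∑ j ∈ Finset.range K, ‖B‖ * ‖∫ t in p j..p (j + 1), g t‖ * D := by
  have hsub : ∀ j, uIcc (p j) (p (j + 1)) ⊆ Icc a b := fun j =>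
    uIcc_subset_Icc (hp_mem j) (hp_mem (j + 1))
  have hpiece : ∀ j, ‖∫ t in p j..p (j + 1), B (g t) (h t)‖ ≤
      ‖B‖ * C * η * (p (j + 1) - p j) + ‖B‖ * ‖∫ t in p j..p (j + 1), g t‖ * D := fun j =>
    (norm_intervalIntegral_bilinear_le B (hp_mono j.le_succ)
      (hg.mono_set (hsub j)).intervalIntegrable (fun t ht => hgC t (hsub j (Icc_subset_uIcc ht))) (hB.mono_set (hsub j)).intervalIntegrable
      (hh j)).trans (by gcongr; exact hhD _ (hp_mem j))
  calc ‖∫ t in a..b, B (g t) (h t)‖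
      = ‖∑ j ∈ Finset.range K, ∫ t in p j..p (j + 1), B (g t) (h t)‖ := by
        rw [intervalIntegral.sum_integral_adjacent_intervals fun j _ =>
          (hB.mono_set (hsub j)).intervalIntegrable, hp0, hpK]
    _ ≤ ∑ j ∈ Finset.range K,
          (‖B‖ * C * η * (p (j + 1) - p j) + ‖B‖ * ‖∫ t in p j..p (j + 1), g t‖ * D) :=
        (norm_sum_le _ _).trans (Finset.sum_le_sum fun j _ => hpiece j)
    _ = ‖B‖ * C * η * (b - a) +
          ∑ j ∈ Finset.range K, ‖B‖ * ‖∫ t in p j..p (j + 1), g t‖ * D := by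
        rw [Finset.sum_add_distrib, ← Finset.mul_sum, Finset.sum_range_sub p, hpK, hp0]

theorem tendsto_intervalIntegral_bilinear_of_equicontinuous {ι : Type*} {l : Filter ι}
    {g : ι → ℝ → X} {h : ι → ℝ → Y} {a b C D : ℝ} (hab : a ≤ b)
    (hg_meas : ∀ i, AEStronglyMeasurable (g i) (volume.restrict (Icc a b)))
    (hgC : ∀ i, ∀ t ∈ Icc a b, ‖g i t‖ ≤ C)
    (hg : ∀ c ∈ Icc a b, ∀ d ∈ Icc a b, Tendsto (fun i => ∫ t in c..d, g i t) l (𝓝 0))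
    (hhD : ∀ i, ∀ t ∈ Icc a b, ‖h i t‖ ≤ D)
    (hequi : ∀ ε > (0 : ℝ), ∃ δ > (0 : ℝ), ∀ i, ∀ s ∈ Icc a b, ∀ t ∈ Icc a b,
      |t - s| ≤ δ → ‖h i t - h i s‖ ≤ ε) :
    Tendsto (fun i => ∫ t in a..b, B (g i t) (h i t)) l (𝓝 0) := by
  have hg_int : ∀ i, IntegrableOn (g i) (Icc a b) := fun i =>
    Integrable.of_bound (hg_meas i) C (ae_restrict_of_forall_mem measurableSet_Icc (hgC i))
  have hh_cont : ∀ i, ContinuousOn (h i) (Icc a b) := fun i =>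
    (uniformContinuousOn_of_forall_abs_sub_le fun ε hε =>
      (hequi ε hε).imp fun _ ⟨hδ, hδε⟩ => ⟨hδ, hδε i⟩).continuousOn
  have hB_int : ∀ i, IntegrableOn (fun t => B (g i t) (h i t)) (Icc a b) := fun i =>
    B.integrable_of_bilin_of_bdd_right D (hg_int i)
      ((hh_cont i).aestronglyMeasurable measurableSet_Icc)
      (ae_restrict_of_forall_mem measurableSet_Icc (hhD i))
  rw [NormedAddGroup.tendsto_nhds_zero]
  intro ε hε
  obtain ⟨η, hη, hηε⟩ := exists_pos_mul_lt (half_pos hε) (‖B‖ * C * (b - a))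
  obtain ⟨δ, hδ, hδη⟩ := hequi η hη
  obtain ⟨K, p, hp_mono, hp0, hpK, hp_mem, hp_step⟩ := exists_partition_Icc_mesh_le hab hδ
  have hvar : ∀ i j, ∀ t ∈ Icc (p j) (p (j + 1)), ‖h i t - h i (p j)‖ ≤ η := by
    intro i j t ht
    refine hδη i _ (hp_mem j) t ⟨(hp_mem j).1.trans ht.1, ht.2.trans (hp_mem (j + 1)).2⟩ ?_
    rw [abs_of_nonneg (sub_nonneg.2 ht.1)]
    linarith [ht.2, hp_step j]
  have hsmall : Tendsto (fun i => ∑ j ∈ Finset.range K,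
      ‖B‖ * ‖∫ t in p j..p (j + 1), g i t‖ * D) l (𝓝 0) := by
    simpa using tendsto_finsetSum _ fun j _ =>
      ((hg _ (hp_mem j) _ (hp_mem (j + 1))).norm.const_mul ‖B‖).mul_const D
  filter_upwards [hsmall.eventually (gt_mem_nhds (half_pos hε))] with i hi
  calc ‖∫ t in a..b, B (g i t) (h i t)‖
      ≤ ‖B‖ * C * η * (b - a) +
          ∑ j ∈ Finset.range K, ‖B‖ * ‖∫ t in p j..p (j + 1), g i t‖ * D :=
        norm_intervalIntegral_bilinear_le_sum B hp_mono hp0 hpK hp_mem (hg_int i) (hgC i)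
          (hB_int i) (hhD i) (hvar i)
    _ < ε / 2 + ε / 2 := add_lt_add (by linarith) hi
    _ = ε := add_halves ε

end Bilinear

theorem stmt12_general
    (X Y Z : Type*)
    [NormedAddCommGroup X] [NormedSpace ℝ X] [CompleteSpace X]
    [NormedAddCommGroup Y] [NormedSpace ℝ Y]
    [NormedAddCommGroup Z] [NormedSpace ℝ Z] [CompleteSpace Z]
    (B : X →L[ℝ] Y →L[ℝ] Z)
    (T : ℝ) (hT : 0 < T)
    (ζ : ℝ → X) (hζmeas : StronglyMeasurable ζ) (hζbdd : ∃ C, ∀ t, ‖ζ t‖ ≤ C)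
    (hanti : ∀ t, ζ (t + 1 / 2) = -ζ t)
    (χ : ℕ → ℝ → Y)
    (hχbdd : ∃ C, ∀ n, ∀ t ∈ Set.Icc (0 : ℝ) T, ‖χ n t‖ ≤ C)
    (hequi : ∀ ε > (0 : ℝ), ∃ δ > (0 : ℝ), ∀ (n : ℕ), ∀ s ∈ Set.Icc (0 : ℝ) T,
      ∀ t ∈ Set.Icc (0 : ℝ) T, |t - s| ≤ δ → ‖χ n t - χ n s‖ ≤ ε)
    (t₀ : ℝ) (ht₀ : t₀ ∈ Set.Icc 0 T) :
    Tendsto (fun n : ℕ => ∫ t in (0 : ℝ)..t₀, B (ζ ((n : ℝ) * t / T)) (χ n t))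
      atTop (nhds 0) := by
  obtain ⟨ht₀, ht₀T⟩ := ht₀
  obtain ⟨Cζ, hCζ⟩ := hζbdd
  obtain ⟨Cχ, hCχ⟩ := hχbdd
  have hsub : Icc 0 t₀ ⊆ Icc 0 T := Icc_subset_Icc_right ht₀T
  have hζanti : Function.Antiperiodic ζ (1 / 2) := hanti
  have hζper : Function.Periodic ζ 1 := by simpa using hζanti.periodic_two_mul
  have hζint : ∀ a b, IntervalIntegrable ζ volume a b := fun a b =>
    intervalIntegrable_const.mono_fun' hζmeas.aestronglyMeasurable.restrict
      (ae_of_all _ hCζ)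
  have hmean : ∫ x in 0..1, ζ x = 0 := by
    simpa using hζanti.intervalIntegral_zero_two_mul_eq_zero (hζint 0 (1 / 2))
  have hosc : ∀ c d, Tendsto (fun n : ℕ => ∫ t in c..d, ζ (n * t / T)) atTop (𝓝 0) := by
    intro c d
    have := (hζper.tendsto_intervalIntegral_comp_mul_atTop one_pos hζint hmean hCζ c d).comp
      (tendsto_natCast_atTop_atTop.atTop_div_const hT)
    simpa only [Function.comp_def, div_mul_eq_mul_div] using this
  exact tendsto_intervalIntegral_bilinear_of_equicontinuous B ht₀
    (fun n => (hζmeas.comp_measurable (by fun_prop)).aestronglyMeasurable)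
    (fun n t _ => hCζ _) (fun c _ d _ => hosc c d) (fun n t ht => hCχ n t (hsub ht))
    fun ε hε => (hequi ε hε).imp fun _ ⟨hδ, hδε⟩ =>
      ⟨hδ, fun n s hs t ht => hδε n s (hsub hs) t (hsub ht)⟩

theorem stmt12
    (X Y Z : Type*)
    [NormedAddCommGroup X] [NormedSpace ℝ X] [CompleteSpace X]
    [NormedAddCommGroup Y] [NormedSpace ℝ Y] [CompleteSpace Y]
    [NormedAddCommGroup Z] [NormedSpace ℝ Z] [CompleteSpace Z]
    (B : X →L[ℝ] Y →L[ℝ] Z)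
    (T : ℝ) (hT : 0 < T)
    (ζ : ℝ → X) (hζmeas : StronglyMeasurable ζ) (hζbdd : ∃ C, ∀ t, ‖ζ t‖ ≤ C)
    (hper : ∀ t, ζ (t + 1) = ζ t) (hanti : ∀ t, ζ (t + 1 / 2) = -ζ t)
    (χ : ℕ → ℝ → Y) (hχcont : ∀ n, ContinuousOn (χ n) (Set.Icc 0 T))
    (hχbdd : ∃ C, ∀ n, ∀ t ∈ Set.Icc (0 : ℝ) T, ‖χ n t‖ ≤ C)
    (hequi : ∀ ε > (0 : ℝ), ∃ δ > (0 : ℝ), ∀ (n : ℕ), ∀ s ∈ Set.Icc (0 : ℝ) T,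
      ∀ t ∈ Set.Icc (0 : ℝ) T, |t - s| ≤ δ → ‖χ n t - χ n s‖ ≤ ε)
    (t₀ : ℝ) (ht₀ : t₀ ∈ Set.Icc 0 T) :
    Tendsto (fun n : ℕ => ∫ t in (0 : ℝ)..t₀, B (ζ ((n : ℝ) * t / T)) (χ n t))
      atTop (nhds 0) :=
  stmt12_general X Y Z B T hT ζ hζmeas hζbdd hanti χ hχbdd hequi t₀ ht₀
end
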